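/- arXiv:2011.07423 — 6 statements merged into one kernel-verified Lean document; each statement's English description precedes it below -/
import Mathlib

section
/- There exist a classifier L : Bool × Bool × Bool → Bool on three binary features and entities e, e' such that L e = true, e' is an s-explanation for e (a counterfactual entity whose change-set is inclusion-minimal among change-sets of counterfactual entities), but e' is not a c-explanation for e: there is a counterfactual entity e'' for e with |Δ(e,e'')| strictly smaller than |Δ(e,e')|. Hence an s-explanation need not be a c-explanation. -/
/-- The change-set of two entities: the set of features where they differ. -/
def delta {n : ℕ} {D : Fin n → Type*} [∀ i, DecidableEq (D i)]
    (e e' : ∀ i, D i) : Finset (Fin n) :=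
  Finset.univ.filter (fun i => e i ≠ e' i)

/-- There is a classifier on three binary features and entities `e`, `e'` such that
`e'` is an s-explanation for `e` but not a c-explanation for `e`. -/
theorem s_explanation_need_not_be_c_explanation :
    ∃ (L : (Fin 3 → Bool) → Bool) (e e' : Fin 3 → Bool),
      L e = true ∧ L e' = false ∧
      (¬ ∃ e'' : Fin 3 → Bool, L e'' = false ∧ delta e e'' ⊂ delta e e') ∧
      (∃ e'' : Fin 3 → Bool, L e'' = false ∧ (delta e e'').card < (delta e e').card) := by
  refine ⟨fun v => !(v = ![false,true,true] || v = ![true,false,false]),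
    ![true,true,true], ![true,false,false], by decide, by decide, by decide,
    ![false,true,true], by decide, by decide⟩
end

section
/- Let e be an entity with L e = true, suppose some counterfactual entity for e exists, and let m° be the minimum of |Δ(e,e')| over all counterfactual entities e' for e. If a feature i : Fin n belongs to Δ(e,e') for some c-explanation e' for e, then x-Resp(e,i) = 1/m°. -/
/-- The responsibility score `x-Resp(e,i)`: the maximum of `1/|Δ(e,e')|` over all
s-explanations `e'` for `e` with `i ∈ Δ(e,e')`, and `0` if there is no such
s-explanation (in `ℝ`, `sSup ∅ = 0`). -/
noncomputable def xResp {n : ℕ} {D : Fin n → Type*} [∀ i, DecidableEq (D i)]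
    (L : (∀ i, D i) → Bool) (e : ∀ i, D i) (i : Fin n) : ℝ :=
  sSup { r : ℝ | ∃ e' : ∀ j, D j, L e' = false ∧
    (¬ ∃ e'' : ∀ j, D j, L e'' = false ∧ delta e e'' ⊂ delta e e') ∧
    i ∈ delta e e' ∧ r = 1 / (delta e e').card }

/-- If a feature `i` occurs in the change-set of some c-explanation for `e`, then its
responsibility score equals `1/m°`, where `m°` is the minimum change-set cardinality
over all counterfactual entities for `e`. -/
theorem xResp_of_feature_in_c_explanation
    {n : ℕ} {D : Fin n → Type*} [∀ i, Fintype (D i)] [∀ i, Nonempty (D i)]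
    [∀ i, DecidableEq (D i)]
    (L : (∀ i, D i) → Bool) (e : ∀ i, D i) (he : L e = true)
    (m : ℕ)
    (hm : ∃ e' : ∀ i, D i, L e' = false ∧ (delta e e').card = m)
    (hmin : ∀ e' : ∀ i, D i, L e' = false → m ≤ (delta e e').card)
    (i : Fin n)
    (hi : ∃ e' : ∀ i, D i, L e' = false ∧
      (∀ e'' : ∀ i, D i, L e'' = false → (delta e e').card ≤ (delta e e'').card) ∧
      i ∈ delta e e') :
    xResp L e i = 1 / (m : ℝ) := by
  obtain ⟨e', hL', hle, hi'⟩ := hi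
  obtain ⟨e0, hL0, hc0⟩ := hm
  have hcard : (delta e e').card = m :=
    le_antisymm (hc0 ▸ hle e0 hL0) (hmin e' hL')
  have hm1 : 1 ≤ m := by
    rcases Nat.eq_zero_or_pos m with h0 | h
    · exfalso
      have hempty : delta e e0 = ∅ := Finset.card_eq_zero.mp (hc0.trans h0)
      have : e = e0 := by
        funext j
        by_contra hj
        have : j ∈ delta e e0 := by simp [delta, hj]
        simp [hempty] at this
      rw [this, hL0] at he
      exact absurd he (by simp)
    · exact h
  have hmR : (0:ℝ) < m := by exact_mod_cast hm1
  apply le_antisymm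
  · apply Real.sSup_le
    · rintro r ⟨e'', hL'', -, -, rfl⟩
      have h1 : m ≤ (delta e e'').card := hmin e'' hL''
      apply one_div_le_one_div_of_le hmR
      exact_mod_cast h1
    · positivity
  · apply le_csSup
    · refine ⟨1 / m, ?_⟩
      rintro r ⟨e'', hL'', -, -, rfl⟩
      have h1 : m ≤ (delta e e'').card := hmin e'' hL''
      apply one_div_le_one_div_of_le hmR
      exact_mod_cast h1
    · refine ⟨e', hL', ?_, hi', by rw [hcard]⟩
      rintro ⟨e'', hL'', hss⟩
      have := Finset.card_lt_card hss
      rw [hcard] at this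
      exact absurd (hmin e'' hL'') (by omega)
end

section
/- Let e be an entity with L e = true, suppose some counterfactual entity for e exists, and let m° be the minimum of |Δ(e,e')| over all counterfactual entities e' for e. Then for every feature i : Fin n, x-Resp(e,i) ≤ 1/m°; and if x-Resp(e,i) = 1/m°, then i belongs to Δ(e,e') for some c-explanation e' for e. Hence the maximum-responsibility feature values are exactly those occurring in c-explanations. -/
/-- Every feature has responsibility at most `1/m°` (with `m°` the minimum
change-set cardinality over counterfactual entities for `e`), and the features
attaining the bound `1/m°` occur in some c-explanation for `e`. -/
theorem max_responsibility_iff_in_c_explanation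
    {n : ℕ} {D : Fin n → Type*} [∀ i, Fintype (D i)] [∀ i, Nonempty (D i)]
    [∀ i, DecidableEq (D i)]
    (L : (∀ i, D i) → Bool) (e : ∀ i, D i) (he : L e = true)
    (m : ℕ)
    (hm : ∃ e' : ∀ i, D i, L e' = false ∧ (delta e e').card = m)
    (hmin : ∀ e' : ∀ i, D i, L e' = false → m ≤ (delta e e').card) :
    (∀ i : Fin n, xResp L e i ≤ 1 / (m : ℝ)) ∧
    (∀ i : Fin n, xResp L e i = 1 / (m : ℝ) →
      ∃ e' : ∀ i, D i, L e' = false ∧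
        (∀ e'' : ∀ i, D i, L e'' = false → (delta e e').card ≤ (delta e e'').card) ∧
        i ∈ delta e e') := by
  -- m ≥ 1
  have hm1 : 1 ≤ m := by
    obtain ⟨e₀, h₀, hc⟩ := hm
    rcases Nat.eq_zero_or_pos m with h | h
    · exfalso
      have : delta e e₀ = ∅ := Finset.card_eq_zero.mp (hc.trans h)
      have hee : e = e₀ := by
        funext j
        by_contra hj
        have hj' : j ∈ delta e e₀ := by simp [delta, hj]
        rw [this] at hj'
        exact absurd hj' (Finset.notMem_empty j)
      rw [← hee] at h₀; rw [he] at h₀; exact Bool.noConfusion h₀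
    · exact h
  have hmR : (0 : ℝ) < m := by exact_mod_cast hm1
  -- bound on each member of the set
  have hbound : ∀ i : Fin n, ∀ r ∈ { r : ℝ | ∃ e' : ∀ j, D j, L e' = false ∧
      (¬ ∃ e'' : ∀ j, D j, L e'' = false ∧ delta e e'' ⊂ delta e e') ∧
      i ∈ delta e e' ∧ r = 1 / (delta e e').card }, r ≤ 1 / (m : ℝ) := by
    rintro i r ⟨e', hL, _, _, rfl⟩
    have hc : (m : ℝ) ≤ (delta e e').card := by exact_mod_cast hmin e' hL
    exact one_div_le_one_div_of_le hmR hc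
  constructor
  · intro i
    exact Real.sSup_le (hbound i) (by positivity)
  · intro i hx
    set S := { r : ℝ | ∃ e' : ∀ j, D j, L e' = false ∧
      (¬ ∃ e'' : ∀ j, D j, L e'' = false ∧ delta e e'' ⊂ delta e e') ∧
      i ∈ delta e e' ∧ r = 1 / (delta e e').card } with hS
    have hfin : S.Finite := by
      have : S ⊆ (fun e' : ∀ j, D j => 1 / ((delta e e').card : ℝ)) '' Set.univ := by
        rintro r ⟨e', _, _, _, rfl⟩
        exact ⟨e', Set.mem_univ _, rfl⟩
      exact Set.Finite.subset (Set.finite_univ.image _) this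
    have hne : S.Nonempty := by
      by_contra hemp
      rw [Set.not_nonempty_iff_eq_empty] at hemp
      have : xResp L e i = 0 := by
        unfold xResp; rw [← hS, hemp, Real.sSup_empty]
      rw [hx] at this
      exact absurd this (by positivity)
    have hmem : sSup S ∈ S := hne.csSup_mem hfin
    have hxS : xResp L e i = sSup S := rfl
    rw [hx] at hxS
    obtain ⟨e', hL, _, hi, hr⟩ := hmem
    refine ⟨e', hL, ?_, hi⟩
    have hcard : (delta e e').card = m := by
      have h1 : (1 : ℝ) / m = 1 / (delta e e').card := by rw [hxS]; exact hr
      have hcpos : (0 : ℝ) < (delta e e').card := by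
        have := hmin e' hL
        have : 1 ≤ (delta e e').card := le_trans hm1 this
        exact_mod_cast this
      field_simp at h1
      exact_mod_cast h1
    intro e'' hL''
    rw [hcard]
    exact hmin e'' hL''
end

section
/- Let Q be a monotone query and D a database instance with Q D = true, and let τ ∈ D. Then τ admits a contingency set if and only if τ belongs to some minimal counterfactual set for Q and D; and when this holds, the minimum cardinality of a minimal counterfactual set containing τ equals 1 plus the minimum cardinality of a contingency set for τ. Consequently, the causal responsibility of the tuple τ for Q in D, namely 1/(1 + min{|Γ| : Γ a contingency set for τ}), coincides with the x-Resp score of the feature value corresponding to τ in the all-true entity under the classifier that maps a subinstance S ⊆ D to Q S. -/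
/-- `Γ` is a contingency set for the tuple `τ` (w.r.t. query `Q` and database `D`). -/
def ContingencySet {U : Type*} [DecidableEq U]
    (Q : Finset U → Bool) (D : Finset U) (τ : U) (Γ : Finset U) : Prop :=
  Γ ⊆ D \ {τ} ∧ Q (D \ Γ) = true ∧ Q (D \ (Γ ∪ {τ})) = false

/-- `S` is a minimal counterfactual set for `Q` and `D`. -/
def MinimalCounterfactualSet {U : Type*} [DecidableEq U]
    (Q : Finset U → Bool) (D : Finset U) (S : Finset U) : Prop :=
  S ⊆ D ∧ Q (D \ S) = false ∧ ¬ ∃ S' ⊂ S, Q (D \ S') = false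

/-- The subinstance of `D` represented by an entity `e : {x // x ∈ D} → Bool`
(the set of coordinates where `e` is true). -/
def toSub {U : Type*} [DecidableEq U] (D : Finset U) (e : {x // x ∈ D} → Bool) : Finset U :=
  (D.attach.filter (fun σ => e σ = true)).image Subtype.val

/-- The classifier on entities induced by the query `Q` on subinstances of `D`. -/
def clsQ {U : Type*} [DecidableEq U] (Q : Finset U → Bool) (D : Finset U)
    (e : {x // x ∈ D} → Bool) : Bool :=
  Q (toSub D e)

/-- The change-set of two entities over the coordinates `{x // x ∈ D}`. -/
def deltaD {U : Type*} (D : Finset U) (e e' : {x // x ∈ D} → Bool) :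
    Finset {x // x ∈ D} :=
  D.attach.filter (fun σ => e σ ≠ e' σ)

/-- The all-true entity, representing `D` itself. -/
def eStar {U : Type*} (D : Finset U) : {x // x ∈ D} → Bool := fun _ => true

/-- `e'` is an s-explanation for the all-true entity under the classifier induced by `Q`:
it is labelled false and its change-set is inclusion-minimal among change-sets of
false-labelled entities. -/
def SExplD {U : Type*} [DecidableEq U] (Q : Finset U → Bool) (D : Finset U)
    (e' : {x // x ∈ D} → Bool) : Prop :=
  clsQ Q D e' = false ∧
    ¬ ∃ e'' : {x // x ∈ D} → Bool, clsQ Q D e'' = false ∧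
      deltaD D (eStar D) e'' ⊂ deltaD D (eStar D) e'

/-- The `x-Resp` score of the coordinate `τ` in the all-true entity under the classifier
induced by `Q` (`sSup ∅ = 0` in `ℝ` covers the case of no suitable s-explanation). -/
noncomputable def xRespD {U : Type*} [DecidableEq U] (Q : Finset U → Bool) (D : Finset U)
    (τ : U) (hτ : τ ∈ D) : ℝ :=
  sSup { r : ℝ | ∃ e' : {x // x ∈ D} → Bool, SExplD Q D e' ∧
    (⟨τ, hτ⟩ : {x // x ∈ D}) ∈ deltaD D (eStar D) e' ∧
    r = 1 / (deltaD D (eStar D) e').card }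

section Aux
variable {U : Type*} [DecidableEq U] (Q : Finset U → Bool) (D : Finset U)

lemma mem_imgDelta {e : {x // x ∈ D} → Bool} {x : U} :
    x ∈ (deltaD D (eStar D) e).image Subtype.val ↔ ∃ h : x ∈ D, e ⟨x, h⟩ = false := by
  simp [deltaD, eStar]

lemma toSub_eq (e : {x // x ∈ D} → Bool) :
    toSub D e = D \ (deltaD D (eStar D) e).image Subtype.val := by
  ext x
  simp [toSub, deltaD, eStar, Finset.mem_sdiff]
  aesop

lemma imgDelta_eOf {S : Finset U} (hS : S ⊆ D) :
    (deltaD D (eStar D) (fun σ => !(decide (σ.val ∈ S)))).image Subtype.val = S := by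
  ext x
  rw [mem_imgDelta]
  simp only [decide_eq_true_eq, Bool.not_eq_false', decide_eq_false_iff_not, not_not]
  exact ⟨fun ⟨_, h⟩ => h, fun h => ⟨hS h, h⟩⟩

lemma imgDelta_card (e : {x // x ∈ D} → Bool) :
    ((deltaD D (eStar D) e).image Subtype.val).card = (deltaD D (eStar D) e).card :=
  Finset.card_image_of_injective _ Subtype.val_injective

lemma sexpl_iff (e : {x // x ∈ D} → Bool) :
    SExplD Q D e ↔ MinimalCounterfactualSet Q D ((deltaD D (eStar D) e).image Subtype.val) := by
  have key : ∀ f : {x // x ∈ D} → Bool, clsQ Q D f = false ↔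
      Q (D \ (deltaD D (eStar D) f).image Subtype.val) = false := by
    intro f; rw [clsQ, toSub_eq]
  constructor
  · rintro ⟨h1, h2⟩
    refine ⟨?_, (key e).1 h1, ?_⟩
    · intro x hx; exact ((mem_imgDelta D).1 hx).1
    · rintro ⟨S', hS'ss, hS'Q⟩
      apply h2
      refine ⟨fun σ => !(decide (σ.val ∈ S')), ?_, ?_⟩
      · rw [key, imgDelta_eOf D (hS'ss.subset.trans (fun x hx => ((mem_imgDelta D).1 hx).1))]
        exact hS'Q
      · rw [← Finset.image_ssubset_image (t := deltaD D (eStar D) e) Subtype.val_injective,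
          imgDelta_eOf D (hS'ss.subset.trans (fun x hx => ((mem_imgDelta D).1 hx).1))]
        exact hS'ss
  · rintro ⟨h0, h1, h2⟩
    refine ⟨(key e).2 h1, ?_⟩
    rintro ⟨e'', he''Q, he''ss⟩
    exact h2 ⟨(deltaD D (eStar D) e'').image Subtype.val,
      Finset.image_ssubset_image Subtype.val_injective |>.2 he''ss, (key e'').1 he''Q⟩

end Aux

section Main
variable {U : Type*} [DecidableEq U] {Q : Finset U → Bool} {D : Finset U} {τ : U}

lemma L1 (hmono : ∀ A B : Finset U, A ⊆ B → Q A = true → Q B = true)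
    (hτ : τ ∈ D) {Γ : Finset U} (hΓ : ContingencySet Q D τ Γ) :
    ∃ S, MinimalCounterfactualSet Q D S ∧ τ ∈ S ∧ S.card ≤ Γ.card + 1 := by
  obtain ⟨hΓsub, hΓt, hΓf⟩ := hΓ
  have hΓD : Γ ∪ {τ} ⊆ D := by
    intro x hx
    rcases Finset.mem_union.1 hx with h | h
    · exact (Finset.mem_sdiff.1 (hΓsub h)).1
    · rw [Finset.mem_singleton.1 h]; exact hτ
  set C := (Γ ∪ {τ}).powerset.filter (fun S => Q (D \ S) = false) with hC
  have hmem : (Γ ∪ {τ}) ∈ C := by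
    simp only [hC, Finset.mem_filter, Finset.mem_powerset]
    exact ⟨Finset.Subset.refl _, hΓf⟩
  obtain ⟨S, hSC, hmin⟩ := Finset.exists_min_image C Finset.card ⟨_, hmem⟩
  simp only [hC, Finset.mem_filter, Finset.mem_powerset] at hSC
  obtain ⟨hSsub, hSf⟩ := hSC
  have hτS : τ ∈ S := by
    by_contra h
    have hSG : S ⊆ Γ := by
      intro x hx
      rcases Finset.mem_union.1 (hSsub hx) with h' | h'
      · exact h'
      · exact absurd (Finset.mem_singleton.1 h' ▸ hx) h
    have : Q (D \ S) = true :=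
      hmono _ _ (Finset.sdiff_subset_sdiff (Finset.Subset.refl D) hSG) hΓt
    simp [this] at hSf
  refine ⟨S, ⟨hSsub.trans hΓD, hSf, ?_⟩, hτS, ?_⟩
  · rintro ⟨S', hS'ss, hS'f⟩
    have hS'C : S' ∈ C := by
      simp only [hC, Finset.mem_filter, Finset.mem_powerset]
      exact ⟨hS'ss.subset.trans hSsub, hS'f⟩
    have := hmin S' hS'C
    exact absurd (Finset.card_lt_card hS'ss) (by omega)
  · calc S.card ≤ (Γ ∪ {τ}).card := hmin _ hmem
      _ ≤ Γ.card + 1 := by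
        simpa using Finset.card_union_le Γ {τ}

lemma L2 {S : Finset U} (hS : MinimalCounterfactualSet Q D S) (hτS : τ ∈ S) :
    ContingencySet Q D τ (S.erase τ) ∧ (S.erase τ).card + 1 = S.card := by
  obtain ⟨hSD, hSf, hSmin⟩ := hS
  have hss : S.erase τ ⊂ S := Finset.erase_ssubset hτS
  refine ⟨⟨?_, ?_, ?_⟩, Finset.card_erase_add_one hτS⟩
  · intro x hx
    exact Finset.mem_sdiff.2 ⟨hSD (Finset.mem_of_mem_erase hx),
      by simpa using Finset.ne_of_mem_erase hx⟩
  · by_contra h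
    exact hSmin ⟨S.erase τ, hss, by simpa using h⟩
  · have : S.erase τ ∪ {τ} = S := by
      ext x; simp [Finset.mem_erase]; constructor
      · rintro (rfl | ⟨_, h⟩) <;> [exact hτS; exact h]
      · intro h; by_cases hx : x = τ <;> [left; right] <;> simp [hx, h]
    rw [this]; exact hSf

end Main

/-- For a monotone query `Q` with `Q D = true` and a tuple `τ ∈ D`: `τ` admits a
contingency set iff `τ` belongs to some minimal counterfactual set; in that case the
minimum cardinality of a minimal counterfactual set containing `τ` equals `1` plus the
minimum cardinality of a contingency set for `τ`, and the causal responsibility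
`1/(1 + min |Γ|)` of `τ` coincides with the `x-Resp` score of the corresponding
feature value in the all-true entity. -/
theorem responsibility_eq_xResp
    {U : Type*} [Fintype U] [DecidableEq U]
    (Q : Finset U → Bool) (hmono : ∀ A B : Finset U, A ⊆ B → Q A = true → Q B = true)
    (D : Finset U) (hQD : Q D = true) (τ : U) (hτ : τ ∈ D) :
    ((∃ Γ, ContingencySet Q D τ Γ) ↔ (∃ S, MinimalCounterfactualSet Q D S ∧ τ ∈ S)) ∧
    ((∃ Γ, ContingencySet Q D τ Γ) →
      (sInf {k : ℕ | ∃ S, MinimalCounterfactualSet Q D S ∧ τ ∈ S ∧ S.card = k}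
        = 1 + sInf {k : ℕ | ∃ Γ, ContingencySet Q D τ Γ ∧ Γ.card = k}) ∧
      ((1 : ℝ) / (1 + ((sInf {k : ℕ | ∃ Γ, ContingencySet Q D τ Γ ∧ Γ.card = k} : ℕ) : ℝ))
        = xRespD Q D τ hτ)) := by
  set K1 := {k : ℕ | ∃ S, MinimalCounterfactualSet Q D S ∧ τ ∈ S ∧ S.card = k} with hK1
  set K2 := {k : ℕ | ∃ Γ, ContingencySet Q D τ Γ ∧ Γ.card = k} with hK2
  have hiff : (∃ Γ, ContingencySet Q D τ Γ) ↔ (∃ S, MinimalCounterfactualSet Q D S ∧ τ ∈ S) := by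
    constructor
    · rintro ⟨Γ, hΓ⟩
      obtain ⟨S, hS, hτS, -⟩ := L1 hmono hτ hΓ
      exact ⟨S, hS, hτS⟩
    · rintro ⟨S, hS, hτS⟩
      exact ⟨S.erase τ, (L2 hS hτS).1⟩
  refine ⟨hiff, ?_⟩
  rintro hex
  have hK2ne : K2.Nonempty := by
    obtain ⟨Γ, hΓ⟩ := hex; exact ⟨Γ.card, Γ, hΓ, rfl⟩
  have hK1ne : K1.Nonempty := by
    obtain ⟨S, hS, hτS⟩ := hiff.1 hex; exact ⟨S.card, S, hS, hτS, rfl⟩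
  -- sInf equality
  have hEq : sInf K1 = 1 + sInf K2 := by
    obtain ⟨Γ, hΓ, hΓc⟩ := Nat.sInf_mem hK2ne
    obtain ⟨S0, hS0, hτS0, hS0c⟩ := L1 hmono hτ hΓ
    have h1 : sInf K1 ≤ 1 + sInf K2 := by
      have := Nat.sInf_le (show S0.card ∈ K1 from ⟨S0, hS0, hτS0, rfl⟩)
      omega
    obtain ⟨S, hS, hτS, hSc⟩ := Nat.sInf_mem hK1ne
    obtain ⟨hcs, hcard⟩ := L2 hS hτS
    have h2 : sInf K2 ≤ (S.erase τ).card := Nat.sInf_le ⟨S.erase τ, hcs, rfl⟩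
    omega
  refine ⟨hEq, ?_⟩
  -- real part
  have hK1pos : ∀ k ∈ K1, 1 ≤ k := by
    rintro k ⟨S, hS, hτS, rfl⟩
    exact Finset.card_pos.2 ⟨τ, hτS⟩
  set n := sInf K1 with hn
  have hnK1 : n ∈ K1 := Nat.sInf_mem hK1ne
  have hn1 : 1 ≤ n := hK1pos n hnK1
  have hRset : { r : ℝ | ∃ e' : {x // x ∈ D} → Bool, SExplD Q D e' ∧
      (⟨τ, hτ⟩ : {x // x ∈ D}) ∈ deltaD D (eStar D) e' ∧
      r = 1 / (deltaD D (eStar D) e').card }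
      = { r : ℝ | ∃ k ∈ K1, r = 1 / (k : ℝ) } := by
    ext r
    simp only [Set.mem_setOf_eq]
    constructor
    · rintro ⟨e', hse, hmemτ, rfl⟩
      refine ⟨((deltaD D (eStar D) e').image Subtype.val).card,
        ⟨_, (sexpl_iff Q D e').1 hse, ?_, rfl⟩, by rw [imgDelta_card]⟩
      exact Finset.mem_image.2 ⟨⟨τ, hτ⟩, hmemτ, rfl⟩
    · rintro ⟨k, ⟨S, hS, hτS, rfl⟩, rfl⟩
      have hSD : S ⊆ D := hS.1
      refine ⟨fun σ => !(decide (σ.val ∈ S)), ?_, ?_, ?_⟩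
      · rw [sexpl_iff, imgDelta_eOf D hSD]; exact hS
      · simp [deltaD, eStar, hτS]
      · have := imgDelta_card D (fun σ : {x // x ∈ D} => !(decide (σ.val ∈ S)))
        rw [imgDelta_eOf D hSD] at this
        rw [← this]
  have hgreat : IsGreatest { r : ℝ | ∃ k ∈ K1, r = 1 / (k : ℝ) } (1 / (n : ℝ)) := by
    constructor
    · exact ⟨n, hnK1, rfl⟩
    · rintro r ⟨k, hk, rfl⟩
      have hk1 := hK1pos k hk
      have hnk : n ≤ k := Nat.sInf_le hk
      apply one_div_le_one_div_of_le
      · exact_mod_cast hn1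
      · exact_mod_cast hnk
  have : xRespD Q D τ hτ = 1 / (n : ℝ) := by
    rw [xRespD, hRset]
    exact hgreat.csSup_eq
  rw [this, hEq]
  push_cast
  ring
end

section
/- For every natural number k ≥ 2 there exist a classifier L : Bool × Fin k → Bool on two features (the first binary, the second with domain Fin k) and an entity e = (false, 0) with L e = true, such that exactly one entity e'' satisfies L e'' = false (namely e'' = (true, k−1)), and the responsibility score of the first feature satisfies x-Resp(e, F1) = 1/2, even though no entity obtained from e by changing only the first feature, and no entity obtained from e by changing only the second feature, is a counterfactual entity for e. -/
/-- The change-set of two entities with two features: the subset of `Fin 2`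
(feature `0` is the first component, feature `1` the second) where they differ. -/
def delta2 {A B : Type*} [DecidableEq A] [DecidableEq B] (e e' : A × B) : Finset (Fin 2) :=
  Finset.univ.filter (fun i => if i = 0 then e.1 ≠ e'.1 else e.2 ≠ e'.2)

/-- The responsibility score `x-Resp(e,i)` for two-feature entities: the maximum of
`1/|Δ(e,e')|` over all s-explanations `e'` for `e` with `i ∈ Δ(e,e')`, and `0` if there
is no such s-explanation (in `ℝ`, `sSup ∅ = 0`). -/
noncomputable def xResp2 {A B : Type*} [DecidableEq A] [DecidableEq B]
    (L : A × B → Bool) (e : A × B) (i : Fin 2) : ℝ :=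
  sSup { r : ℝ | ∃ e' : A × B, L e' = false ∧
    (¬ ∃ e'' : A × B, L e'' = false ∧ delta2 e e'' ⊂ delta2 e e') ∧
    i ∈ delta2 e e' ∧ r = 1 / (delta2 e e').card }

/-- For every `k ≥ 2` there is a classifier on `Bool × Fin k` and the entity
`e = (false, 0)` with label true, whose unique counterfactual entity is
`(true, k-1)`, so that `x-Resp(e, F₁) = 1/2` although no single-feature change of
either feature of `e` is counterfactual. -/
theorem first_feature_half_responsibility (k : ℕ) (hk : 2 ≤ k) :
    ∃ L : Bool × Fin k → Bool,
      L (false, ⟨0, by omega⟩) = true ∧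
      (∀ e'' : Bool × Fin k, L e'' = false ↔ e'' = (true, ⟨k - 1, by omega⟩)) ∧
      xResp2 L (false, ⟨0, by omega⟩) 0 = 1 / 2 ∧
      (∀ a : Bool, a ≠ false → ¬ L (a, ⟨0, by omega⟩) = false) ∧
      (∀ j : Fin k, j ≠ ⟨0, by omega⟩ → ¬ L (false, j) = false) := by
  set t : Bool × Fin k := (true, ⟨k - 1, by omega⟩) with ht
  set e : Bool × Fin k := (false, ⟨0, by omega⟩) with he
  refine ⟨fun p => decide (p ≠ t), ?_, ?_, ?_, ?_, ?_⟩
  · simp [ht]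
    simp [he]
  · intro e''; simp
  · have hdelta : delta2 e t = Finset.univ := by
      ext i
      simp only [delta2, Finset.mem_filter, Finset.mem_univ, true_and]
      split
      · simp [he, ht]
      · simp only [he, ht, ne_eq, Fin.mk.injEq, iff_true]
        omega
    have hset : { r : ℝ | ∃ e' : Bool × Fin k, (fun p => decide (p ≠ t)) e' = false ∧
        (¬ ∃ e'' : Bool × Fin k, (fun p => decide (p ≠ t)) e'' = false ∧
          delta2 e e'' ⊂ delta2 e e') ∧
        (0 : Fin 2) ∈ delta2 e e' ∧ r = 1 / (delta2 e e').card } = {1/2} := by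
      ext r
      simp only [Set.mem_setOf_eq, Set.mem_singleton_iff, decide_eq_false_iff_not, not_not]
      constructor
      · rintro ⟨e', rfl, -, -, rfl⟩
        rw [hdelta]
        norm_num
      · rintro rfl
        refine ⟨t, rfl, ?_, ?_, ?_⟩
        · rintro ⟨e'', rfl, hsub⟩
          exact absurd rfl hsub.ne
        · rw [hdelta]; exact Finset.mem_univ _
        · rw [hdelta]; norm_num
    unfold xResp2
    rw [hset, csSup_singleton]
  · intro a ha
    simp [ht, Prod.ext_iff, Fin.ext_iff]
    omega
  · intro j hj
    simp only [decide_eq_false_iff_not, not_not, ht, Prod.mk.injEq, not_and]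
    simp
end

section
/- For every natural number k ≥ 3 there exist a classifier L : Fin k × Bool → Bool on two features (the first with domain Fin k) and an entity e = (0, false) with L e = true, such that x-Resp(e, F1) = 1 (the first feature value is a counterfactual value-explanation), yet among the k−1 entities obtained from e by changing only the first feature, exactly one is a counterfactual entity for e; i.e., the feature value attains maximal responsibility 1 even though most single-feature interventions on it do not switch the label. -/
lemma delta2_empty_iff {A B : Type*} [DecidableEq A] [DecidableEq B] (e e' : A × B) :
    delta2 e e' = ∅ ↔ e = e' := by
  constructor
  · intro h
    have h0 : (0 : Fin 2) ∉ delta2 e e' := by simp [h]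
    have h1 : (1 : Fin 2) ∉ delta2 e e' := by simp [h]
    simp [delta2] at h0 h1
    exact Prod.ext h0 h1
  · intro h; subst h; simp [delta2]

/-- For every `k ≥ 3` there is a classifier on `Fin k × Bool` and the entity
`e = (0, false)` with label true such that `x-Resp(e, F₁) = 1`, although among the
`k-1` entities obtained from `e` by changing only the first feature exactly one is
a counterfactual entity. -/
theorem full_responsibility_with_single_switching_intervention (k : ℕ) (hk : 3 ≤ k) :
    ∃ L : Fin k × Bool → Bool,
      L (⟨0, by omega⟩, false) = true ∧
      xResp2 L (⟨0, by omega⟩, false) 0 = 1 ∧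
      (∃! j : Fin k, j ≠ ⟨0, by omega⟩ ∧ L (j, false) = false) := by
  set z : Fin k := ⟨0, by omega⟩
  set o : Fin k := ⟨1, by omega⟩
  have hzo : z ≠ o := by simp [z, o, Fin.ext_iff]
  refine ⟨fun p => !(decide (p = (o, false))), by simp [hzo], ?_, ?_⟩
  · -- xResp2 = 1
    set e : Fin k × Bool := (z, false)
    set L : Fin k × Bool → Bool := fun p => !(decide (p = (o, false)))
    have hL : ∀ p, L p = false ↔ p = (o, false) := by intro p; simp [L]
    have hdelta : delta2 e (o, false) = {0} := by
      ext i
      fin_cases i <;> simp [delta2, e, hzo]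
    have h1mem : (1 : ℝ) ∈ { r : ℝ | ∃ e' : Fin k × Bool, L e' = false ∧
        (¬ ∃ e'' : Fin k × Bool, L e'' = false ∧ delta2 e e'' ⊂ delta2 e e') ∧
        (0 : Fin 2) ∈ delta2 e e' ∧ r = 1 / (delta2 e e').card } := by
      refine ⟨(o, false), by simp [hL], ?_, by simp [hdelta], by simp [hdelta]⟩
      rintro ⟨e'', h'', hsub⟩
      rw [hdelta] at hsub
      have : delta2 e e'' = ∅ := by
        rcases Finset.eq_empty_or_nonempty (delta2 e e'') with h | h
        · exact h
        · exfalso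
          obtain ⟨i, hi⟩ := h
          have := hsub.1 hi
          simp at this
          subst this
          exact hsub.2 (by simp [Finset.singleton_subset_iff, hi])
      rw [delta2_empty_iff] at this
      rw [hL] at h''
      rw [← this] at h''
      exact hzo (congrArg Prod.fst h'')
    have hub : ∀ r ∈ { r : ℝ | ∃ e' : Fin k × Bool, L e' = false ∧
        (¬ ∃ e'' : Fin k × Bool, L e'' = false ∧ delta2 e e'' ⊂ delta2 e e') ∧
        (0 : Fin 2) ∈ delta2 e e' ∧ r = 1 / (delta2 e e').card }, r ≤ 1 := by
      rintro r ⟨e', _, _, hmem, hr⟩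
      have hcard : 1 ≤ (delta2 e e').card := Finset.card_pos.mpr ⟨0, hmem⟩
      rw [hr]
      rw [div_le_one (by exact_mod_cast hcard)]
      exact_mod_cast hcard
    apply le_antisymm
    · exact csSup_le ⟨1, h1mem⟩ hub
    · exact le_csSup ⟨1, hub⟩ h1mem
  · -- unique j
    refine ⟨o, ⟨Ne.symm hzo, by simp⟩, ?_⟩
    rintro j ⟨-, hj⟩
    simpa using hj
end
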